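/- arXiv:0710.1530 — 6 statements merged into one kernel-verified Lean document; each statement's English description precedes it below -/
import Mathlib

section
/- Let A, L, P be n×n complex matrices and assume that L and P are normal. Then (a) AL = PA if and only if AL* = P*A (where * denotes conjugate transpose); and (b) if in addition L and P are nonsingular, then AL = PA if and only if A(L⁻¹)* = (P⁻¹)*A. -/
/-!
Part (a) is the Fuglede–Putnam theorem, available for C⋆-algebras, and complex matrices form one
under the `L²` operator norm. Part (b) is part (a) for `L⁻¹` and `P⁻¹`: inverses of normal matrices
are normal, and for invertible `L`, `P` the relation `A * L = P * A` is equivalent to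
`A * L⁻¹ = P⁻¹ * A`.
-/

open Matrix

open scoped Matrix.Norms.L2Operator

namespace Matrix

variable {n : Type*} [Fintype n] [DecidableEq n]

theorem isStarNormal_nonsing_inv {α : Type*} [CommRing α] [StarRing α] {L : Matrix n n α}
    (hL : IsStarNormal L) : IsStarNormal L⁻¹ := by
  simpa [isStarNormal_iff, Commute, SemiconjBy, star_eq_conjTranspose, conjTranspose_nonsing_inv,
    ← mul_inv_rev] using (congrArg Inv.inv hL.star_comm_self.eq).symm

theorem semiconjBy_nonsing_inv_iff {α : Type*} [CommRing α] {A L P : Matrix n n α}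
    (hL : IsUnit L.det) (hP : IsUnit P.det) :
    SemiconjBy A L⁻¹ P⁻¹ ↔ SemiconjBy A L P :=
  SemiconjBy.units_inv_right_iff (x := nonsingInvUnit L hL) (y := nonsingInvUnit P hP)

theorem semiconjBy_conjTranspose_iff {A L P : Matrix n n ℂ} (hL : IsStarNormal L)
    (hP : IsStarNormal P) : SemiconjBy A Lᴴ Pᴴ ↔ SemiconjBy A L P :=
  ⟨fun h ↦ by simpa using h.star_right hL.star hP.star, fun h ↦ h.star_right hL hP⟩

end Matrix

/-- Fuglede–Putnam type lemma: if `L` and `P` are normal, then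
(a) `A * L = P * A ↔ A * Lᴴ = Pᴴ * A`, and
(b) if `L` and `P` are nonsingular, `A * L = P * A ↔ A * (L⁻¹)ᴴ = (P⁻¹)ᴴ * A`. -/
theorem stmt_0 {n : ℕ} (A L P : Matrix (Fin n) (Fin n) ℂ)
    (hL : Lᴴ * L = L * Lᴴ) (hP : Pᴴ * P = P * Pᴴ) :
    (A * L = P * A ↔ A * Lᴴ = Pᴴ * A) ∧
    (IsUnit L.det → IsUnit P.det →
      (A * L = P * A ↔ A * (L⁻¹)ᴴ = (P⁻¹)ᴴ * A)) := by
  have hL : IsStarNormal L := ⟨hL⟩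
  have hP : IsStarNormal P := ⟨hP⟩
  refine ⟨(semiconjBy_conjTranspose_iff hL hP).symm, fun hLdet hPdet ↦ ?_⟩
  calc SemiconjBy A L P
      ↔ SemiconjBy A L⁻¹ P⁻¹ := (semiconjBy_nonsing_inv_iff hLdet hPdet).symm
    _ ↔ SemiconjBy A (L⁻¹)ᴴ (P⁻¹)ᴴ :=
      (semiconjBy_conjTranspose_iff (isStarNormal_nonsing_inv hL)
        (isStarNormal_nonsing_inv hP)).symm
end

section
/- Let A, B, S be nonsingular n×n complex matrices and let S = WQ be a right polar decomposition of S (W unitary, Q positive definite Hermitian). Then A and B are unitarily congruent if and only if there is a nonsingular matrix S such that A = SBSᵀ and A⁻* = SB⁻*Sᵀ. In fact, if A = SBSᵀ and A⁻* = SB⁻*Sᵀ with S = WQ, then A = WBWᵀ and A⁻* = WB⁻*Wᵀ. -/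
open Matrix
open scoped ComplexOrder

/-! Suppose `A = S B Sᵀ` and `A⁻* = S B⁻* Sᵀ`. Inverting and taking adjoints of either identity
shows that `X = B` and `X = B⁻*` both satisfy `S X Sᵀ = S⁻* X (S⁻*)ᵀ`, that is
`Q² X (Q²)ᵀ = X` since `S*S = Q²`. With `Q = R*R`, the map `X ↦ Q X Qᵀ` is positive for the
trace inner product, `tr (Z* Q Z Qᵀ) = ‖R Z Rᵀ‖²`, so a fixed point of its square is a fixed point
of the map itself; hence `S X Sᵀ = W (Q X Qᵀ) Wᵀ = W X Wᵀ`. For the converse, a congruence `T`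
of both pairs is replaced by the unitary factor of its polar decomposition. -/

namespace Matrix

variable {n : Type*} [Fintype n] [DecidableEq n]

section CommRing

variable {R : Type*} [CommRing R] [StarRing R]

lemma conjTranspose_inv_mul_mul_transpose (S B : Matrix n n R) :
    ((S * B * Sᵀ)⁻¹)ᴴ = (S⁻¹)ᴴ * (B⁻¹)ᴴ * ((S⁻¹)ᴴ)ᵀ := by
  simp only [mul_inv_rev, conjTranspose_mul, ← transpose_nonsing_inv, mul_assoc]
  rfl

lemma conjTranspose_inv_conjTranspose_inv {A : Matrix n n R} (hA : IsUnit A.det) :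
    (((A⁻¹)ᴴ)⁻¹)ᴴ = A := by
  rw [conjTranspose_nonsing_inv, conjTranspose_conjTranspose, nonsing_inv_nonsing_inv _ hA]

lemma conjTranspose_mul_self_congr_eq_of_congr_eq {S X : Matrix n n R} (hS : IsUnit S.det)
    (h : S * X * Sᵀ = (S⁻¹)ᴴ * X * ((S⁻¹)ᴴ)ᵀ) :
    Sᴴ * S * X * (Sᴴ * S)ᵀ = X := by
  have hSH : IsUnit Sᴴ.det := by rw [det_conjTranspose]; exact hS.star
  have hSHT : IsUnit Sᴴᵀ.det := by rwa [det_transpose]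
  calc Sᴴ * S * X * (Sᴴ * S)ᵀ = Sᴴ * (S * X * Sᵀ) * Sᴴᵀ := by
        simp only [transpose_mul, mul_assoc]
    _ = X := by
        rw [h, conjTranspose_nonsing_inv, transpose_nonsing_inv]
        simp only [mul_assoc, nonsing_inv_mul _ hSHT, mul_one,
          mul_nonsing_inv_cancel_left _ _ hSH]

end CommRing

section RCLike

variable {𝕜 : Type*} [RCLike 𝕜]

lemma eq_zero_of_mul_mul_transpose_eq_neg {Q Z : Matrix n n 𝕜} (hQ : Q.PosSemidef)
    (h : Q * Z * Qᵀ = -Z) : Z = 0 := by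
  open scoped MatrixOrder in
  obtain ⟨R, rfl⟩ := CStarAlgebra.nonneg_iff_eq_star_mul_self.mp hQ.nonneg
  set M := R * Z * Rᵀ
  have hM : (Mᴴ * M).trace = -(Zᴴ * Z).trace := by
    calc (Mᴴ * M).trace = (Zᴴ * (star R * R * Z * (star R * R)ᵀ)).trace := by
          simp only [M, conjTranspose_mul, transpose_mul, star_eq_conjTranspose, mul_assoc]
          rw [trace_mul_comm]
          simp only [mul_assoc]
          rfl
      _ = -(Zᴴ * Z).trace := by rw [h, mul_neg, trace_neg]
  have hsum : (Mᴴ * M).trace + (Zᴴ * Z).trace = 0 := by rw [hM, neg_add_cancel]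
  rw [← trace_conjTranspose_mul_self_eq_zero_iff]
  exact ((add_eq_zero_iff_of_nonneg (posSemidef_conjTranspose_mul_self M).trace_nonneg
    (posSemidef_conjTranspose_mul_self Z).trace_nonneg).1 hsum).2

lemma mul_mul_transpose_eq_of_sq {Q X : Matrix n n 𝕜} (hQ : Q.PosSemidef)
    (h : Q * Q * X * (Q * Q)ᵀ = X) : Q * X * Qᵀ = X := by
  rw [← sub_eq_zero]
  refine eq_zero_of_mul_mul_transpose_eq_neg hQ ?_
  calc Q * (Q * X * Qᵀ - X) * Qᵀ = Q * Q * X * (Q * Q)ᵀ - Q * X * Qᵀ := by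
        simp only [mul_sub, sub_mul, transpose_mul, mul_assoc]
    _ = -(Q * X * Qᵀ - X) := by rw [h, neg_sub]

lemma mul_mul_transpose_eq_of_polar {S W Q X : Matrix n n 𝕜} (hS : IsUnit S.det)
    (hW : Wᴴ * W = 1) (hQ : Q.PosSemidef) (hWQ : S = W * Q)
    (h : S * X * Sᵀ = (S⁻¹)ᴴ * X * ((S⁻¹)ᴴ)ᵀ) :
    S * X * Sᵀ = W * X * Wᵀ := by
  have hSS : Sᴴ * S = Q * Q := by
    rw [hWQ, conjTranspose_mul, hQ.isHermitian.eq, mul_assoc, ← mul_assoc Wᴴ, hW, one_mul]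
  have hQX : Q * X * Qᵀ = X :=
    mul_mul_transpose_eq_of_sq hQ (hSS ▸ conjTranspose_mul_self_congr_eq_of_congr_eq hS h)
  calc S * X * Sᵀ = W * (Q * X * Qᵀ) * Wᵀ := by simp only [hWQ, transpose_mul, mul_assoc]
    _ = W * X * Wᵀ := by rw [hQX]

lemma exists_unitary_posDef_mul {T : Matrix n n 𝕜} (hT : IsUnit T.det) :
    ∃ W Q : Matrix n n 𝕜, Wᴴ * W = 1 ∧ Q.PosDef ∧ T = W * Q := by
  open scoped MatrixOrder in
  have hTT : (Tᴴ * T).PosDef :=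
    .conjTranspose_mul_self T (mulVec_injective_iff_isUnit.2 ((isUnit_iff_isUnit_det T).2 hT))
  set Q := CFC.sqrt (Tᴴ * T)
  have hQ : Q.PosDef := isStrictlyPositive_iff_posDef.1 hTT.isStrictlyPositive.sqrt
  have hQQ : Q * Q = Tᴴ * T := CFC.sqrt_mul_sqrt_self _ hTT.posSemidef.nonneg
  have hQdet : IsUnit Q.det := (isUnit_iff_isUnit_det Q).1 hQ.isUnit
  refine ⟨T * Q⁻¹, Q, ?_, hQ, (nonsing_inv_mul_cancel_right _ _ hQdet).symm⟩
  calc (T * Q⁻¹)ᴴ * (T * Q⁻¹) = Q⁻¹ * (Q * Q) * Q⁻¹ := by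
        rw [hQQ, conjTranspose_mul, conjTranspose_nonsing_inv, hQ.isHermitian.eq]
        simp only [mul_assoc]
    _ = 1 := by rw [← mul_assoc, nonsing_inv_mul _ hQdet, one_mul, mul_nonsing_inv _ hQdet]

theorem eq_mul_mul_transpose_of_polar {A B S W Q : Matrix n n 𝕜}
    (hA : IsUnit A.det) (hB : IsUnit B.det) (hS : IsUnit S.det)
    (hW : Wᴴ * W = 1) (hQ : Q.PosSemidef) (hWQ : S = W * Q)
    (h : A = S * B * Sᵀ) (hinv : (A⁻¹)ᴴ = S * (B⁻¹)ᴴ * Sᵀ) :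
    A = W * B * Wᵀ ∧ (A⁻¹)ᴴ = W * (B⁻¹)ᴴ * Wᵀ := by
  have hB' : S * B * Sᵀ = (S⁻¹)ᴴ * B * ((S⁻¹)ᴴ)ᵀ := by
    rw [← h, ← conjTranspose_inv_conjTranspose_inv hA, hinv,
      conjTranspose_inv_mul_mul_transpose, conjTranspose_inv_conjTranspose_inv hB]
  have hBinv : S * (B⁻¹)ᴴ * Sᵀ = (S⁻¹)ᴴ * (B⁻¹)ᴴ * ((S⁻¹)ᴴ)ᵀ := by
    rw [← hinv, h, conjTranspose_inv_mul_mul_transpose]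
  exact ⟨h.trans (mul_mul_transpose_eq_of_polar hS hW hQ hWQ hB'),
    hinv.trans (mul_mul_transpose_eq_of_polar hS hW hQ hWQ hBinv)⟩

end RCLike

end Matrix

/-- Criterion for unitary congruence: nonsingular `A` and `B` are unitarily congruent iff
the pairs `(A, A⁻*)` and `(B, B⁻*)` are congruent; moreover, if the congruence is achieved
by `S` with right polar decomposition `S = WQ`, then it is achieved by the unitary `W`. -/
theorem stmt_8 {n : ℕ} (A B S W Q : Matrix (Fin n) (Fin n) ℂ)
    (hA : IsUnit A.det) (hB : IsUnit B.det) (hS : IsUnit S.det)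
    (hW : Wᴴ * W = 1) (hQ : Q.PosDef) (hWQ : S = W * Q) :
    ((∃ U : Matrix (Fin n) (Fin n) ℂ, Uᴴ * U = 1 ∧ A = U * B * Uᵀ) ↔
      ∃ T : Matrix (Fin n) (Fin n) ℂ, IsUnit T.det ∧
        A = T * B * Tᵀ ∧ (A⁻¹)ᴴ = T * (B⁻¹)ᴴ * Tᵀ) ∧
    ((A = S * B * Sᵀ ∧ (A⁻¹)ᴴ = S * (B⁻¹)ᴴ * Sᵀ) →
      (A = W * B * Wᵀ ∧ (A⁻¹)ᴴ = W * (B⁻¹)ᴴ * Wᵀ)) := by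
  refine ⟨⟨fun ⟨U, hU, hAU⟩ => ?_, fun ⟨T, hT, h, hinv⟩ => ?_⟩, fun ⟨h, hinv⟩ =>
    eq_mul_mul_transpose_of_polar hA hB hS hW hQ.posSemidef hWQ h hinv⟩
  · have hUinv : (U⁻¹)ᴴ = U := by rw [inv_eq_left_inv hU, conjTranspose_conjTranspose]
    refine ⟨U, isUnit_det_of_left_inverse hU, hAU, ?_⟩
    rw [hAU, conjTranspose_inv_mul_mul_transpose, hUinv]
  · obtain ⟨W', Q', hW', hQ', rfl⟩ := exists_unitary_posDef_mul hT
    exact ⟨W', hW', (eq_mul_mul_transpose_of_polar hA hB hT hW' hQ'.posSemidef rfl h hinv).1⟩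
end

section
/- Let A, B, S be nonsingular n×n complex matrices and let S = WQ be a right polar decomposition of S (W unitary, Q positive definite Hermitian). Then A and B are unitarily *congruent if and only if there is a nonsingular matrix S such that A = SBS* and A⁻* = SB⁻*S*. In fact, if A = SBS* and A⁻* = SB⁻*S* with S = WQ, then A = WBW* and A⁻* = WB⁻*W*. -/
open Matrix
open scoped ComplexOrder

/-!
If `A = SBS*` and `A⁻* = SB⁻*S*`, comparing the second identity with the inverse of the first gives
`Q²B⁻*Q² = B⁻*`, where `Q² = S*S`. Since `X ↦ QXQ` is a positive operator for the trace inner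
product, this forces `QB⁻*Q = B⁻*`: the difference `N = QXQ - X` satisfies `QNQ = -N`, so
`tr(N*QNQ) = -tr(N*N)` is both nonnegative and nonpositive. Inverting gives `QBQ = B`, so `S = WQ`
may be replaced by `W`. Conversely `U⁻¹ = U*` for unitary `U`, and a nonsingular `T` realizing the
pair of congruences is replaced by the unitary factor of its polar decomposition.
-/

namespace Matrix

section CommRing

variable {R n : Type*} [CommRing R] [Fintype n] [DecidableEq n]

theorem mul_mul_eq_of_mul_inv_mul_eq {Q B : Matrix n n R} (hQ : IsUnit Q.det) (hB : IsUnit B.det)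
    (h : Q * B⁻¹ * Q = B⁻¹) : Q * B * Q = B := by
  have hinv : Q⁻¹ * B * Q⁻¹ = B := by
    simpa only [mul_inv_rev, nonsing_inv_nonsing_inv B hB, mul_assoc] using congrArg Inv.inv h
  calc Q * B * Q = Q * (Q⁻¹ * B * Q⁻¹) * Q := by rw [hinv]
    _ = B := by
      rw [mul_assoc Q⁻¹, ← mul_assoc Q, mul_nonsing_inv _ hQ, one_mul,
        nonsing_inv_mul_cancel_right _ _ hQ]

variable [StarRing R]

theorem conjTranspose_inv_mul_mul_conjTranspose (T B : Matrix n n R) :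
    (T * B * Tᴴ)⁻¹ᴴ = T⁻¹ᴴ * B⁻¹ᴴ * T⁻¹ := by
  rw [mul_inv_rev, mul_inv_rev, ← conjTranspose_nonsing_inv]
  simp only [conjTranspose_mul, conjTranspose_conjTranspose, mul_assoc]

theorem conjTranspose_inv_mul_mul_conjTranspose_of_unitary {U : Matrix n n R} (hU : Uᴴ * U = 1)
    (B : Matrix n n R) : (U * B * Uᴴ)⁻¹ᴴ = U * B⁻¹ᴴ * Uᴴ := by
  rw [conjTranspose_inv_mul_mul_conjTranspose, inv_eq_left_inv hU, conjTranspose_conjTranspose]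

theorem conjTranspose_mul_self_conj_eq {T X : Matrix n n R} (hT : IsUnit T.det)
    (h : T * X * Tᴴ = T⁻¹ᴴ * X * T⁻¹) : Tᴴ * T * X * (Tᴴ * T) = X := by
  have hTT : Tᴴ * T⁻¹ᴴ = 1 := by rw [← conjTranspose_mul, nonsing_inv_mul T hT, conjTranspose_one]
  calc Tᴴ * T * X * (Tᴴ * T) = Tᴴ * (T * X * Tᴴ) * T := by simp only [mul_assoc]
    _ = Tᴴ * T⁻¹ᴴ * X * (T⁻¹ * T) := by rw [h]; simp only [mul_assoc]
    _ = X := by rw [hTT, nonsing_inv_mul T hT, one_mul, mul_one]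

end CommRing

section RCLike

variable {𝕜 n : Type*} [RCLike 𝕜] [Fintype n]

theorem PosSemidef.trace_mul_nonneg [DecidableEq n] {A B : Matrix n n 𝕜} (hA : A.PosSemidef)
    (hB : B.PosSemidef) : 0 ≤ (A * B).trace := by
  open scoped MatrixOrder in
  obtain ⟨R, rfl⟩ := CStarAlgebra.nonneg_iff_eq_star_mul_self.mp hB.nonneg
  rw [star_eq_conjTranspose, ← mul_assoc, trace_mul_cycle]
  exact (hA.mul_mul_conjTranspose_same R).trace_nonneg

theorem PosSemidef.eq_zero_of_mul_mul_eq_neg {Q N : Matrix n n 𝕜} (hQ : Q.PosSemidef)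
    (h : Q * N * Q = -N) : N = 0 := by
  classical
  have hnonneg : 0 ≤ (Nᴴ * Q * N * Q).trace :=
    (hQ.conjTranspose_mul_mul_same N).trace_mul_nonneg hQ
  have hneg : (Nᴴ * Q * N * Q).trace = -(Nᴴ * N).trace := by
    rw [mul_assoc (Nᴴ * Q), mul_assoc, ← mul_assoc Q, h, mul_neg, trace_neg]
  rw [← trace_conjTranspose_mul_self_eq_zero_iff]
  exact le_antisymm (neg_nonneg.mp (hneg ▸ hnonneg))
    (posSemidef_conjTranspose_mul_self N).trace_nonneg

theorem PosSemidef.mul_mul_eq_of_sq_mul_mul_sq_eq {Q M : Matrix n n 𝕜} (hQ : Q.PosSemidef)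
    (h : Q * Q * M * (Q * Q) = M) : Q * M * Q = M := by
  have hN : Q * (Q * M * Q - M) * Q = -(Q * M * Q - M) := by
    calc Q * (Q * M * Q - M) * Q = Q * Q * M * (Q * Q) - Q * M * Q := by
          simp only [mul_sub, sub_mul, mul_assoc]
      _ = -(Q * M * Q - M) := by rw [h, neg_sub]
  exact sub_eq_zero.mp (hQ.eq_zero_of_mul_mul_eq_neg hN)

theorem exists_polar_decomposition [DecidableEq n] {T : Matrix n n 𝕜} (hT : IsUnit T) :
    ∃ W Q : Matrix n n 𝕜, Wᴴ * W = 1 ∧ Q.PosDef ∧ T = W * Q := by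
  open scoped MatrixOrder in
  obtain ⟨hQpos, hQQ⟩ :=
    CStarAlgebra.isStrictlyPositive_iff_isStrictlyPositive_sqrt_and_eq_sqrt_mul_sqrt.mp
      ((hT.star.mul hT).isStrictlyPositive (star_mul_self_nonneg T))
  set Q := CFC.sqrt (star T * T)
  have hQ : Q.PosDef := hQpos.posDef
  have hQu : IsUnit Q.det := (isUnit_iff_isUnit_det Q).mp hQ.isUnit
  refine ⟨T * Q⁻¹, Q, ?_, hQ, (nonsing_inv_mul_cancel_right _ _ hQu).symm⟩
  calc (T * Q⁻¹)ᴴ * (T * Q⁻¹) = Q⁻¹ * (Q * Q) * Q⁻¹ := by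
        rw [← hQQ, conjTranspose_mul, conjTranspose_nonsing_inv, hQ.1.eq, star_eq_conjTranspose]
        simp only [mul_assoc]
    _ = 1 := by rw [nonsing_inv_mul_cancel_left _ _ hQu, mul_nonsing_inv _ hQu]

theorem eq_unitary_conj_of_eq_polar_conj [DecidableEq n] {A B W Q : Matrix n n 𝕜}
    (hW : Wᴴ * W = 1) (hQ : Q.PosDef) (hB : IsUnit B.det)
    (h₁ : A = W * Q * B * (W * Q)ᴴ) (h₂ : A⁻¹ᴴ = W * Q * B⁻¹ᴴ * (W * Q)ᴴ) :
    A = W * B * Wᴴ ∧ A⁻¹ᴴ = W * B⁻¹ᴴ * Wᴴ := by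
  have hQu : IsUnit Q.det := (isUnit_iff_isUnit_det Q).mp hQ.isUnit
  have hWQ : IsUnit (W * Q).det := by
    rw [det_mul]; exact (isUnit_det_of_left_inverse hW).mul hQu
  have hpolar : ∀ X : Matrix n n 𝕜, W * Q * X * (W * Q)ᴴ = W * (Q * X * Q) * Wᴴ := fun X => by
    simp only [conjTranspose_mul, hQ.1.eq, mul_assoc]
  have hsq : (W * Q)ᴴ * (W * Q) = Q * Q := by
    rw [conjTranspose_mul, mul_assoc, ← mul_assoc Wᴴ, hW, one_mul, hQ.1.eq]
  have hQinv : Q * B⁻¹ᴴ * Q = B⁻¹ᴴ := by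
    refine hQ.posSemidef.mul_mul_eq_of_sq_mul_mul_sq_eq ?_
    rw [← hsq]
    refine conjTranspose_mul_self_conj_eq hWQ ?_
    rw [← h₂, h₁, conjTranspose_inv_mul_mul_conjTranspose]
  have hQB : Q * B * Q = B := by
    refine mul_mul_eq_of_mul_inv_mul_eq hQu hB ?_
    simpa only [conjTranspose_mul, hQ.1.eq, conjTranspose_conjTranspose, mul_assoc]
      using congrArg conjTranspose hQinv
  exact ⟨h₁.trans (by rw [hpolar, hQB]), h₂.trans (by rw [hpolar, hQinv])⟩

end RCLike

end Matrix

theorem stmt_9_general {n : ℕ} (A B S W Q : Matrix (Fin n) (Fin n) ℂ)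
    (hB : IsUnit B.det) (hW : Wᴴ * W = 1) (hQ : Q.PosDef) (hWQ : S = W * Q) :
    ((∃ U : Matrix (Fin n) (Fin n) ℂ, Uᴴ * U = 1 ∧ A = U * B * Uᴴ) ↔
      ∃ T : Matrix (Fin n) (Fin n) ℂ, IsUnit T.det ∧
        A = T * B * Tᴴ ∧ (A⁻¹)ᴴ = T * (B⁻¹)ᴴ * Tᴴ) ∧
    ((A = S * B * Sᴴ ∧ (A⁻¹)ᴴ = S * (B⁻¹)ᴴ * Sᴴ) →
      (A = W * B * Wᴴ ∧ (A⁻¹)ᴴ = W * (B⁻¹)ᴴ * Wᴴ)) := by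
  refine ⟨⟨?_, ?_⟩, ?_⟩
  · rintro ⟨U, hU, rfl⟩
    exact ⟨U, isUnit_det_of_left_inverse hU, rfl,
      conjTranspose_inv_mul_mul_conjTranspose_of_unitary hU B⟩
  · rintro ⟨T, hT, h₁, h₂⟩
    obtain ⟨V, P, hV, hP, rfl⟩ := exists_polar_decomposition ((isUnit_iff_isUnit_det T).mpr hT)
    exact ⟨V, hV, (eq_unitary_conj_of_eq_polar_conj hV hP hB h₁ h₂).1⟩
  · subst hWQ
    exact fun ⟨h₁, h₂⟩ => eq_unitary_conj_of_eq_polar_conj hW hQ hB h₁ h₂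

/-- Criterion for unitary *congruence: nonsingular `A` and `B` are unitarily *congruent iff
the pairs `(A, A⁻*)` and `(B, B⁻*)` are *congruent; moreover, if the *congruence is achieved
by `S` with right polar decomposition `S = WQ`, then it is achieved by the unitary `W`. -/
theorem stmt_9 {n : ℕ} (A B S W Q : Matrix (Fin n) (Fin n) ℂ)
    (hA : IsUnit A.det) (hB : IsUnit B.det) (hS : IsUnit S.det)
    (hW : Wᴴ * W = 1) (hQ : Q.PosDef) (hWQ : S = W * Q) :
    ((∃ U : Matrix (Fin n) (Fin n) ℂ, Uᴴ * U = 1 ∧ A = U * B * Uᴴ) ↔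
      ∃ T : Matrix (Fin n) (Fin n) ℂ, IsUnit T.det ∧
        A = T * B * Tᴴ ∧ (A⁻¹)ᴴ = T * (B⁻¹)ᴴ * Tᴴ) ∧
    ((A = S * B * Sᴴ ∧ (A⁻¹)ᴴ = S * (B⁻¹)ᴴ * Sᴴ) →
      (A = W * B * Wᴴ ∧ (A⁻¹)ᴴ = W * (B⁻¹)ᴴ * Wᴴ)) :=
  stmt_9_general A B S W Q hB hW hQ hWQ
end

section
/- Let A and B be n×n complex matrices. (a) If A and B are either both unitary or both coninvolutory, then A and B are unitarily congruent if and only if they are congruent. (b) If A and B are either both unitary or both involutory, then A and B are unitarily *congruent if and only if they are *congruent. -/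
/-!
Suppose `A = S B Sᵀ` with `S` invertible and put `H = Sᴴ S`, which is positive definite. Since
`A⁻¹` is `Aᴴ` (unitary case) resp. `conj A` (coninvolutory case), and likewise for `B`, computing
`A⁻¹` from the congruence in two ways gives `H B Hᵀ = B`, i.e. `B Hᵀ = H⁻¹ B`. Take a real
polynomial `p` interpolating `√` on the spectra of `H` and of `H⁻¹`, so that `p(H) = H^{1/2}` and
`R := p(H⁻¹) = H^{-1/2}`. The intertwining relation passes to polynomials: `B p(H)ᵀ = R B`, i.e.
`R B Rᵀ = B`. Hence `U = S R` is unitary and `U B Uᵀ = S B Sᵀ = A`. The *congruence case is the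
same argument with `Hᵀ` replaced by `H`.
-/

open Matrix Polynomial
open scoped ComplexOrder

theorem Polynomial.semiconjBy_aeval {R A : Type*} [CommSemiring R] [Semiring A] [Algebra R A]
    {a x y : A} (h : SemiconjBy a x y) (p : R[X]) : SemiconjBy a (aeval x p) (aeval y p) := by
  induction p using Polynomial.induction_on' with
  | add p q hp hq => simpa only [map_add] using hp.add_right hq
  | monomial k c =>
    simpa only [aeval_monomial] using
      SemiconjBy.mul_right (Algebra.commute_algebraMap_right c a) (h.pow_right k)

namespace Matrix

theorem aeval_transpose {R α n : Type*} [CommSemiring R] [CommSemiring α] [Algebra R α]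
    [Fintype n] [DecidableEq n] (M : Matrix n n α) (p : R[X]) :
    aeval Mᵀ p = (aeval M p)ᵀ :=
  MulOpposite.op_injective <| by
    simpa [aeval_op_apply] using aeval_algHom_apply (transposeAlgEquiv n R α) M p

theorem mul_mul_eq_of_mul_mul_mul_eq_one {α n : Type*} [CommRing α] [Fintype n] [DecidableEq n]
    {A B B' T X : Matrix n n α} (hB : B' * B = 1) (h : T * B' * X * A = 1) : X * A * T = B := by
  have h₁ : B' * (X * A * T) = 1 := by
    rw [← Matrix.mul_assoc, ← Matrix.mul_assoc, mul_eq_one_comm]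
    simpa only [Matrix.mul_assoc] using h
  calc X * A * T = B * B' * (X * A * T) := by rw [mul_eq_one_comm.1 hB, Matrix.one_mul]
    _ = B := by rw [Matrix.mul_assoc, h₁, Matrix.mul_one]

theorem semiconjBy_nonsing_inv_of_mul_mul_eq {α n : Type*} [CommRing α] [Fintype n]
    [DecidableEq n] {H B X : Matrix n n α} (hH : IsUnit H.det) (h : H * B * X = B) :
    SemiconjBy B X H⁻¹ :=
  calc B * X = H⁻¹ * H * B * X := by rw [nonsing_inv_mul H hH, Matrix.one_mul]
    _ = H⁻¹ * (H * B * X) := by simp only [Matrix.mul_assoc]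
    _ = H⁻¹ * B := by rw [h]

variable {n 𝕜 : Type*} [Fintype n] [DecidableEq n] [RCLike 𝕜]

theorem PosDef.exists_polynomial_inv_sqrt {H : Matrix n n 𝕜} (hH : H.PosDef) :
    ∃ p : ℝ[X], (aeval H⁻¹ p).IsHermitian ∧ aeval H⁻¹ p * H * aeval H⁻¹ p = 1 ∧
      aeval H⁻¹ p * aeval H p = 1 := by
  have hspec : ∀ x ∈ spectrum ℝ H, 0 < x := by
    rw [hH.1.spectrum_real_eq_range_eigenvalues]
    rintro _ ⟨i, rfl⟩
    exact hH.eigenvalues_pos i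
  -- `hsa` and `hcont_inv` discharge the auto-params of the `cfc` lemmas below.
  have hsa : IsSelfAdjoint H := hH.1.isSelfAdjoint
  have hcont_inv : ContinuousOn (·⁻¹ : ℝ → ℝ) (spectrum ℝ H) :=
    continuousOn_inv₀.mono fun x hx => (hspec x hx).ne'
  have hfin : (spectrum ℝ H).Finite :=
    hH.1.spectrum_real_eq_range_eigenvalues ▸ Set.finite_range _
  let s := (hfin.union (hfin.image (·⁻¹))).toFinset
  let p := Lagrange.interpolate s id Real.sqrt
  have hp : ∀ x ∈ s, p.eval x = √x := fun x hx =>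
    Lagrange.eval_interpolate_at_node _ (Set.injOn_id _) hx
  have hinv : H⁻¹ = cfc (·⁻¹ : ℝ → ℝ) H := by
    rw [nonsing_inv_eq_ringInverse, cfc_ringInverse_id (R := ℝ) _ hH.isUnit]
  have hQ : aeval H p = cfc Real.sqrt H := by
    rw [← cfc_polynomial p H]
    exact cfc_congr fun x hx => hp x (by simp [s, hx])
  have hR : aeval H⁻¹ p = cfc (fun x => √x⁻¹) H := by
    rw [hinv, ← cfc_map_polynomial p _ H]
    exact cfc_congr fun x hx => hp _ (by simp [s, hx])
  refine ⟨p, ?_, ?_, ?_⟩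
  · rw [hR]
    exact cfc_predicate _ _
  · rw [hR, ← cfc_const_one ℝ H]
    nth_rewrite 2 [← cfc_id ℝ H]
    rw [← cfc_mul .., ← cfc_mul ..]
    refine cfc_congr fun x hx => ?_
    have hx₀ := (hspec x hx).le
    rw [Real.sqrt_inv, id, mul_comm, ← mul_assoc, ← mul_inv, Real.mul_self_sqrt hx₀,
      inv_mul_cancel₀ (hspec x hx).ne']
  · rw [hR, hQ, ← cfc_mul .., ← cfc_const_one ℝ H]
    exact cfc_congr fun x hx => by
      rw [Real.sqrt_inv, inv_mul_cancel₀ (Real.sqrt_pos.2 (hspec x hx)).ne']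

theorem PosDef.exists_inv_sqrt_mul_mul_transpose_eq_self {H B : Matrix n n 𝕜} (hH : H.PosDef)
    (hB : H * B * Hᵀ = B) :
    ∃ R : Matrix n n 𝕜, R.IsHermitian ∧ R * H * R = 1 ∧ R * B * Rᵀ = B := by
  obtain ⟨p, hR, hRHR, hRQ⟩ := hH.exists_polynomial_inv_sqrt
  refine ⟨aeval H⁻¹ p, hR, hRHR, ?_⟩
  have hBH : SemiconjBy B Hᵀ H⁻¹ :=
    semiconjBy_nonsing_inv_of_mul_mul_eq (H.isUnit_iff_isUnit_det.1 hH.isUnit) hB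
  have hBQ : SemiconjBy B (aeval H p)ᵀ (aeval H⁻¹ p) := by
    simpa only [aeval_transpose] using semiconjBy_aeval hBH p
  rw [← hBQ.eq, Matrix.mul_assoc, ← transpose_mul, hRQ, transpose_one, Matrix.mul_one]

theorem PosDef.exists_inv_sqrt_mul_mul_conjTranspose_eq_self {H B : Matrix n n 𝕜} (hH : H.PosDef)
    (hB : H * B * H = B) :
    ∃ R : Matrix n n 𝕜, R.IsHermitian ∧ R * H * R = 1 ∧ R * B * Rᴴ = B := by
  obtain ⟨p, hR, hRHR, hRQ⟩ := hH.exists_polynomial_inv_sqrt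
  refine ⟨aeval H⁻¹ p, hR, hRHR, ?_⟩
  have hBH : SemiconjBy B H H⁻¹ :=
    semiconjBy_nonsing_inv_of_mul_mul_eq (H.isUnit_iff_isUnit_det.1 hH.isUnit) hB
  rw [hR.eq, ← (semiconjBy_aeval hBH p).eq, Matrix.mul_assoc, mul_eq_one_comm.1 hRQ,
    Matrix.mul_one]

theorem exists_unitary_mul_mul_transpose_eq {S B : Matrix n n 𝕜} (hS : IsUnit S)
    (hB : Sᴴ * S * B * (Sᴴ * S)ᵀ = B) :
    ∃ U : Matrix n n 𝕜, Uᴴ * U = 1 ∧ S * B * Sᵀ = U * B * Uᵀ := by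
  have hH := PosDef.conjTranspose_mul_self S (mulVec_injective_of_isUnit hS)
  obtain ⟨R, hR, hRHR, hRBR⟩ := hH.exists_inv_sqrt_mul_mul_transpose_eq_self hB
  refine ⟨S * R, ?_, ?_⟩
  · rw [conjTranspose_mul, hR.eq, ← hRHR]
    simp only [Matrix.mul_assoc]
  · conv_lhs => rw [← hRBR]
    simp only [transpose_mul, Matrix.mul_assoc]

theorem exists_unitary_mul_mul_conjTranspose_eq {S B : Matrix n n 𝕜} (hS : IsUnit S)
    (hB : Sᴴ * S * B * (Sᴴ * S) = B) :
    ∃ U : Matrix n n 𝕜, Uᴴ * U = 1 ∧ S * B * Sᴴ = U * B * Uᴴ := by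
  have hH := PosDef.conjTranspose_mul_self S (mulVec_injective_of_isUnit hS)
  obtain ⟨R, hR, hRHR, hRBR⟩ := hH.exists_inv_sqrt_mul_mul_conjTranspose_eq_self hB
  refine ⟨S * R, ?_, ?_⟩
  · rw [conjTranspose_mul, hR.eq, ← hRHR]
    simp only [Matrix.mul_assoc]
  · conv_lhs => rw [← hRBR]
    simp only [conjTranspose_mul, Matrix.mul_assoc]

end Matrix

/-- (a) If `A` and `B` are both unitary or both coninvolutory, then they are unitarily
congruent iff they are congruent. (b) If `A` and `B` are both unitary or both involutory,
then they are unitarily *congruent iff they are *congruent. -/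
theorem stmt_10 {n : ℕ} (A B : Matrix (Fin n) (Fin n) ℂ) :
    (((Aᴴ * A = 1 ∧ Bᴴ * B = 1) ∨
        (A.map (starRingEnd ℂ) * A = 1 ∧ B.map (starRingEnd ℂ) * B = 1)) →
      ((∃ U : Matrix (Fin n) (Fin n) ℂ, Uᴴ * U = 1 ∧ A = U * B * Uᵀ) ↔
        (∃ S : Matrix (Fin n) (Fin n) ℂ, IsUnit S.det ∧ A = S * B * Sᵀ))) ∧
    (((Aᴴ * A = 1 ∧ Bᴴ * B = 1) ∨ (A * A = 1 ∧ B * B = 1)) →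
      ((∃ U : Matrix (Fin n) (Fin n) ℂ, Uᴴ * U = 1 ∧ A = U * B * Uᴴ) ↔
        (∃ S : Matrix (Fin n) (Fin n) ℂ, IsUnit S.det ∧ A = S * B * Sᴴ))) := by
  refine ⟨fun h => ⟨fun ⟨U, hU, hA⟩ => ⟨U, isUnit_det_of_left_inverse hU, hA⟩, ?_⟩,
    fun h => ⟨fun ⟨U, hU, hA⟩ => ⟨U, isUnit_det_of_left_inverse hU, hA⟩, ?_⟩⟩
  · rintro ⟨S, hS, rfl⟩
    have key : Sᴴ * (S * B * Sᵀ) * Sᴴᵀ = B := by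
      rcases h with ⟨hA, hB⟩ | ⟨hA, hB⟩
      · refine mul_mul_eq_of_mul_mul_mul_eq_one hB ?_
        have e : (S * B * Sᵀ)ᴴ = Sᴴᵀ * Bᴴ * Sᴴ := by
          rw [conjTranspose_mul, conjTranspose_mul,
            conjTranspose_transpose_eq_transpose_conjTranspose, Matrix.mul_assoc]
        rwa [e] at hA
      · refine mul_mul_eq_of_mul_mul_mul_eq_one hB ?_
        have e :
            (S * B * Sᵀ).map (starRingEnd ℂ) = Sᴴᵀ * B.map (starRingEnd ℂ) * Sᴴ := by
          rw [Matrix.map_mul, Matrix.map_mul]; rfl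
        rwa [e] at hA
    refine exists_unitary_mul_mul_transpose_eq ((isUnit_iff_isUnit_det S).2 hS) ?_
    simpa only [transpose_mul, Matrix.mul_assoc] using key
  · rintro ⟨S, hS, rfl⟩
    have key : Sᴴ * (S * B * Sᴴ) * S = B := by
      rcases h with ⟨hA, hB⟩ | ⟨hA, hB⟩
      · refine mul_mul_eq_of_mul_mul_mul_eq_one hB ?_
        simpa only [conjTranspose_mul, conjTranspose_conjTranspose, Matrix.mul_assoc] using hA
      · refine mul_mul_eq_of_mul_mul_mul_eq_one hB ?_
        simpa only [Matrix.mul_assoc] using hA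
    refine exists_unitary_mul_mul_conjTranspose_eq ((isUnit_iff_isUnit_det S).2 hS) ?_
    simpa only [Matrix.mul_assoc] using key
end

section
/- Let A be an n×n complex matrix. Let P = (AA*)^{1/2} and Q = (A*A)^{1/2} be the unique positive semidefinite Hermitian square roots of AA* and A*A, and let S = (A + Aᵀ)/2 and C = (A − Aᵀ)/2 be the symmetric and skew-symmetric parts of A. The following are equivalent: (a) S·conj(C) = C·conj(S); (b) A is conjugate normal, i.e., A*A = conj(AA*); (c) Q = conj(P); (d) PA = A·conj(P). -/
/-!
The symmetric/skew decomposition gives `S·conj(C) − C·conj(S) = (conj(A*A) − AA*)/2`, which is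
(a) ⇔ (b). Since `Q² = A*A` and `conj(P)² = conj(AA*)`, and positive semidefinite square roots
are unique, (b) ⇔ (c). For every `A` the polar factors intertwine, `PA = AQ`, because
`[0 A; 0 0]` commutes with `diag(P, Q)²` and hence with its square root `diag(P, Q)`; so
(c) ⇒ (d). Conversely (d) gives `AA*A = A·conj(AA*)`, hence `M(M − N) = 0` for the Hermitian
matrices `M = A*A`, `N = conj(AA*)`; as also `tr(M²) = tr(N²)`, this forces `tr((M − N)²) = 0`.
-/

open Matrix ComplexConjugate
open scoped ComplexOrder

namespace Matrix

section Conj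

variable {m n 𝕜 : Type*} [RCLike 𝕜]

lemma map_conj_map_conj (M : Matrix m n 𝕜) : (M.map conj).map conj = M := by
  ext; simp

lemma map_conj_eq_iff {M N : Matrix m n 𝕜} : M.map conj = N ↔ M = N.map conj := by
  constructor <;> rintro rfl <;> rw [map_conj_map_conj]

lemma conjTranspose_map_conj (M : Matrix m n 𝕜) : Mᴴ.map conj = Mᵀ := by
  ext; simp

lemma IsHermitian.map_conj {M : Matrix n n 𝕜} (hM : M.IsHermitian) : M.map conj = Mᵀ := by
  rw [← conjTranspose_map_conj, hM.eq]

lemma PosSemidef.map_conj {M : Matrix n n 𝕜} (hM : M.PosSemidef) : (M.map conj).PosSemidef := by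
  rw [hM.1.map_conj]
  exact hM.transpose

end Conj

variable {m 𝕜 : Type*} [Fintype m] [RCLike 𝕜]

def IsConjNormal (A : Matrix m m 𝕜) : Prop :=
  Aᴴ * A = (A * Aᴴ).map conj

lemma symm_mul_conj_skew_sub_skew_mul_conj_symm {A S C : Matrix m m 𝕜}
    (hS : S = (2 : 𝕜)⁻¹ • (A + Aᵀ)) (hC : C = (2 : 𝕜)⁻¹ • (A - Aᵀ)) :
    S * C.map conj - C * S.map conj = (2 : 𝕜)⁻¹ • ((Aᴴ * A).map conj - A * Aᴴ) := by
  have hsum : (A + Aᵀ).map conj = A.map conj + Aᴴ := Matrix.map_add _ (map_add _) _ _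
  have hdiff : (A - Aᵀ).map conj = A.map conj - Aᴴ := Matrix.map_sub _ (map_sub _) _ _
  have hprod : (Aᴴ * A).map conj = Aᵀ * A.map conj := by
    rw [Matrix.map_mul, conjTranspose_map_conj]
  subst hS hC
  rw [Matrix.map_smul' _ _ _ (map_mul _), Matrix.map_smul' _ _ _ (map_mul _), hsum, hdiff, hprod,
    map_inv₀, map_ofNat]
  simp only [smul_mul_smul_comm, smul_sub, mul_add, add_mul, mul_sub, sub_mul]
  module

lemma isConjNormal_iff_symm_mul_conj_skew_eq {A S C : Matrix m m 𝕜}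
    (hS : S = (2 : 𝕜)⁻¹ • (A + Aᵀ)) (hC : C = (2 : 𝕜)⁻¹ • (A - Aᵀ)) :
    A.IsConjNormal ↔ S * C.map conj = C * S.map conj := by
  rw [IsConjNormal, ← map_conj_eq_iff, ← sub_eq_zero, ← sub_eq_zero (a := S * _),
    symm_mul_conj_skew_sub_skew_mul_conj_symm hS hC, smul_eq_zero_iff_right (by norm_num)]

lemma PosSemidef.fromBlocks_zero {P Q : Matrix m m 𝕜} (hP : P.PosSemidef) (hQ : Q.PosSemidef) :
    (fromBlocks P 0 0 Q).PosSemidef := by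
  rw [posSemidef_iff_dotProduct_mulVec] at *
  refine ⟨hP.1.fromBlocks (by simp) hQ.1, fun x => ?_⟩
  obtain ⟨y, z, rfl⟩ : ∃ y z, x = Sum.elim y z := ⟨_, _, (Sum.elim_comp_inl_inr x).symm⟩
  simpa [fromBlocks_mulVec, Function.star_sumElim, sumElim_dotProduct_sumElim]
    using add_nonneg (hP.2 y) (hQ.2 z)

lemma IsHermitian.eq_of_mul_sub_eq_zero {M N : Matrix m m 𝕜} (hM : M.IsHermitian)
    (hN : N.IsHermitian) (h : M * (M - N) = 0) (htr : trace (M * M) = trace (N * N)) : M = N := by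
  have hMN : M * N = M * M := by rwa [mul_sub, sub_eq_zero, eq_comm] at h
  have hNM : N * M = M * M := by
    simpa [conjTranspose_mul, hM.eq, hN.eq] using congrArg (·ᴴ) hMN
  have : trace ((M - N)ᴴ * (M - N)) = 0 := by
    rw [(hM.sub hN).eq, sub_mul, mul_sub, mul_sub, hMN, hNM, trace_sub, trace_sub, trace_sub, htr]
    ring
  exact sub_eq_zero.mp (trace_conjTranspose_mul_self_eq_zero_iff.mp this)

lemma trace_map_conj_mul_conjTranspose_sq (A : Matrix m m 𝕜) :
    trace ((A * Aᴴ).map conj * (A * Aᴴ).map conj) = trace ((Aᴴ * A) * (Aᴴ * A)) := by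
  rw [(isHermitian_mul_conjTranspose_self A).map_conj, ← transpose_mul, trace_transpose,
    mul_assoc, trace_mul_comm, ← mul_assoc, ← mul_assoc]

lemma isConjNormal_of_mul_eq_mul_map_conj {A P : Matrix m m 𝕜} (hPA : P * P = A * Aᴴ)
    (hd : P * A = A * P.map conj) : A.IsConjNormal := by
  have hAAA : A * Aᴴ * A = A * (A * Aᴴ).map conj := by
    rw [← hPA, Matrix.map_mul, mul_assoc, hd, ← mul_assoc, hd, mul_assoc]
  refine (isHermitian_conjTranspose_mul_self A).eq_of_mul_sub_eq_zero ?_ ?_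
    (trace_map_conj_mul_conjTranspose_sq A).symm
  · rw [(isHermitian_mul_conjTranspose_self A).map_conj]
    exact (isHermitian_mul_conjTranspose_self A).transpose
  · rw [mul_assoc, mul_sub, ← mul_assoc, hAAA, sub_self, mul_zero]

variable [DecidableEq m]

open scoped MatrixOrder in
lemma PosSemidef.eq_of_mul_self_eq {P Q : Matrix m m 𝕜} (hP : P.PosSemidef)
    (hQ : Q.PosSemidef) (h : P * P = Q * Q) : P = Q := by
  rw [← CFC.sqrt_mul_self P hP.nonneg, h, CFC.sqrt_mul_self Q hQ.nonneg]

open scoped MatrixOrder in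
lemma PosSemidef.commute_of_commute_mul_self {R X : Matrix m m 𝕜} (hR : R.PosSemidef)
    (h : Commute (R * R) X) : Commute R X := by
  rw [← CFC.sqrt_mul_self R hR.nonneg]
  exact h.cfcₙ_nnreal _

lemma PosSemidef.mul_eq_mul_of_mul_self_eq {A P Q : Matrix m m 𝕜} (hP : P.PosSemidef)
    (hPA : P * P = A * Aᴴ) (hQ : Q.PosSemidef) (hQA : Q * Q = Aᴴ * A) : P * A = A * Q := by
  have hcomm : Commute (fromBlocks P 0 0 Q * fromBlocks P 0 0 Q) (fromBlocks 0 A 0 0) := by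
    simp [Commute, SemiconjBy, fromBlocks_multiply, hPA, hQA, mul_assoc]
  have := congrArg toBlocks₁₂ ((hP.fromBlocks_zero hQ).commute_of_commute_mul_self hcomm).eq
  simpa [fromBlocks_multiply] using this

lemma isConjNormal_iff_eq_map_conj {A P Q : Matrix m m 𝕜} (hP : P.PosSemidef)
    (hPA : P * P = A * Aᴴ) (hQ : Q.PosSemidef) (hQA : Q * Q = Aᴴ * A) :
    A.IsConjNormal ↔ Q = P.map conj := by
  rw [IsConjNormal, ← hPA, ← hQA, Matrix.map_mul]
  exact ⟨hQ.eq_of_mul_self_eq hP.map_conj, fun h => by rw [h]⟩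

end Matrix

/-- Characterizations of conjugate normal matrices: with `P = (AA*)^{1/2}`,
`Q = (A*A)^{1/2}`, `S = (A + Aᵀ)/2`, `C = (A − Aᵀ)/2`, the following are equivalent:
(a) `S·conj(C) = C·conj(S)`; (b) `A*A = conj(AA*)`; (c) `Q = conj(P)`; (d) `PA = A·conj(P)`. -/
theorem stmt_11 {n : ℕ} (A P Q S C : Matrix (Fin n) (Fin n) ℂ)
    (hP : P.PosSemidef) (hPA : P * P = A * Aᴴ)
    (hQ : Q.PosSemidef) (hQA : Q * Q = Aᴴ * A)
    (hS : S = (2 : ℂ)⁻¹ • (A + Aᵀ)) (hC : C = (2 : ℂ)⁻¹ • (A - Aᵀ)) :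
    ((S * C.map (starRingEnd ℂ) = C * S.map (starRingEnd ℂ)) ↔
      (Aᴴ * A = (A * Aᴴ).map (starRingEnd ℂ))) ∧
    ((Aᴴ * A = (A * Aᴴ).map (starRingEnd ℂ)) ↔ Q = P.map (starRingEnd ℂ)) ∧
    ((Aᴴ * A = (A * Aᴴ).map (starRingEnd ℂ)) ↔ P * A = A * P.map (starRingEnd ℂ)) := by
  have hbc : A.IsConjNormal ↔ Q = P.map conj := isConjNormal_iff_eq_map_conj hP hPA hQ hQA
  refine ⟨(isConjNormal_iff_symm_mul_conj_skew_eq hS hC).symm, hbc, ?_, ?_⟩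
  · intro hb
    rw [← hbc.mp hb]
    exact hP.mul_eq_mul_of_mul_self_eq hPA hQ hQA
  · exact isConjNormal_of_mul_eq_mul_map_conj hPA
end

section
/- Let A be a nonsingular n×n complex matrix. Then the cosquare A⁻ᵀA is unitary if and only if A is conjugate normal, i.e., A*A = conj(AA*). -/
/-!
With `C = A⁻ᵀA` one has `Cᴴ = Aᴴ (Aᴴᵀ)⁻¹`, so `CᴴC = Aᴴ ((AᴴA)ᵀ)⁻¹ A`, which is `1` exactly when
`(AᴴA)ᵀ = AAᴴ`. On the Hermitian matrices `AᴴA` and `AAᴴ` transposition is entrywise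
conjugation, so this is the conjugate-normality condition `AᴴA = conj (AAᴴ)`.
-/

open Matrix

namespace Matrix

theorem IsHermitian.map_star {m α : Type*} [Star α] {M : Matrix m m α} (hM : M.IsHermitian) :
    M.map star = Mᵀ := by
  rw [← conjTranspose_transpose, hM.eq]

variable {m α : Type*} [Fintype m] [DecidableEq m] [CommRing α]

theorem mul_nonsing_inv_eq_one_iff {X B : Matrix m m α} (hB : IsUnit B.det) :
    X * B⁻¹ = 1 ↔ X = B := by
  constructor
  · intro h
    rw [← mul_one X, ← nonsing_inv_mul B hB, ← Matrix.mul_assoc, h, Matrix.one_mul]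
  · rintro rfl
    exact mul_nonsing_inv X hB

variable [StarRing α]

theorem conjTranspose_cosquare_mul_cosquare (A : Matrix m m α) :
    ((A⁻¹)ᵀ * A)ᴴ * ((A⁻¹)ᵀ * A) = Aᴴ * ((Aᴴ * A)ᵀ)⁻¹ * A := by
  rw [conjTranspose_mul, transpose_nonsing_inv, conjTranspose_nonsing_inv, transpose_mul,
    mul_inv_rev, conjTranspose_transpose_eq_transpose_conjTranspose]
  simp only [Matrix.mul_assoc]

theorem conjTranspose_mul_nonsing_inv_mul_eq_one_iff (A : Matrix m m α) {B : Matrix m m α}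
    (hB : IsUnit B.det) : Aᴴ * B⁻¹ * A = 1 ↔ A * Aᴴ = B := by
  rw [mul_eq_one_comm, ← Matrix.mul_assoc, mul_nonsing_inv_eq_one_iff hB]

end Matrix

/-- For nonsingular `A`, the cosquare `A⁻ᵀ·A` is unitary iff `A` is conjugate normal,
i.e. `A*A = conj(AA*)`. -/
theorem stmt_12 {n : ℕ} (A : Matrix (Fin n) (Fin n) ℂ) (hA : IsUnit A.det) :
    (((A⁻¹)ᵀ * A)ᴴ * ((A⁻¹)ᵀ * A) = 1) ↔
      Aᴴ * A = (A * Aᴴ).map (starRingEnd ℂ) := by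
  have hGram : IsUnit (Aᴴ * A)ᵀ.det := by
    rw [det_transpose, det_mul, det_conjTranspose]
    exact hA.star.mul hA
  rw [conjTranspose_cosquare_mul_cosquare, conjTranspose_mul_nonsing_inv_mul_eq_one_iff A hGram,
    show (A * Aᴴ).map (starRingEnd ℂ) = (A * Aᴴ).map star from rfl,
    (isHermitian_mul_conjTranspose_self A).map_star, ← transpose_inj, transpose_transpose, eq_comm]
end
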